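/- Let C be the real line and f an analytic function on the closed first and third quadrants of the complex plane that decays sufficiently fast at infinity (e.g. |f(z)||z|^2 → 0 uniformly as |z| → ∞ in those quadrants). Then ∫_{-∞}^{∞} f(x)|x| dx = i² ∫_{-∞}^{∞} f(it)|t| dt, i.e. the contour of the integral ∫ f(z)|z| dz may be rotated from the real axis to the imaginary axis. -/

import Mathlib

/-!
On the positive half-axes the weighted integrands are those of `g z = z f(z)`:
`f(x)|x| = g(x)` and `i · f(it)|t| = i t · f(it) = g(it)`. Cauchy's theorem on the square
`[0, R]²` rotates `∫₀^R g(x) dx` into `i ∫₀^R g(it) dt` up to the two far edges, which have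
length `R` and on which `|g| = o(1/R)`; letting `R → ∞` gives the rotation on the first quadrant.
The negative half-axes are the same statement for `z ↦ f(-z)`, which is analytic on the first
quadrant because `f` is analytic on the third.
-/

open Complex MeasureTheory Filter Set Topology Interval

lemma norm_intervalIntegral_le_of_norm_le_div {E : Type*} [NormedAddCommGroup E]
    [NormedSpace ℝ E] {φ : ℝ → E} {R ε : ℝ} (hR : 0 < R)
    (h : ∀ x ∈ Ι 0 R, ‖φ x‖ ≤ ε / R) : ‖∫ x in (0 : ℝ)..R, φ x‖ ≤ ε :=
  calc ‖∫ x in (0 : ℝ)..R, φ x‖ ≤ ε / R * |R - 0| :=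
        intervalIntegral.norm_integral_le_of_norm_le_const h
    _ = ε := by rw [sub_zero, abs_of_pos hR, div_mul_cancel₀ _ hR.ne']

section QuarterPlane

variable {E : Type*} [NormedAddCommGroup E] [NormedSpace ℂ E] {g : ℂ → E}

lemma integral_sub_I_smul_integral_eq_of_differentiableOn
    (hg : DifferentiableOn ℂ g (Ici 0 ×ℂ Ici 0)) {R : ℝ} (hR : 0 ≤ R) :
    (∫ x in (0 : ℝ)..R, g x) - I • ∫ t in (0 : ℝ)..R, g (t * I) =
      (∫ x in (0 : ℝ)..R, g (x + R * I)) - I • ∫ t in (0 : ℝ)..R, g (R + t * I) := by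
  have hrect := integral_boundary_rect_eq_zero_of_differentiableOn g 0 (R + R * I) <|
    hg.mono <| by
      simp only [zero_re, zero_im, add_re, add_im, ofReal_re, ofReal_im, mul_re, mul_im, I_re,
        I_im, mul_zero, mul_one, sub_zero, add_zero, zero_add, uIcc_of_le hR]
      exact reProdIm_subset_iff'.mpr (Or.inl ⟨Icc_subset_Ici_self, Icc_subset_Ici_self⟩)
  simp only [zero_re, zero_im, add_re, add_im, ofReal_re, ofReal_im, mul_re, mul_im, I_re, I_im,
    mul_zero, mul_one, zero_mul, sub_zero, add_zero, zero_add, ofReal_zero] at hrect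
  rw [← sub_eq_zero, ← hrect]
  abel

lemma tendsto_integral_sub_I_smul_integral_zero
    (hg : DifferentiableOn ℂ g (Ici 0 ×ℂ Ici 0))
    (hdecay : ∀ ε > (0 : ℝ), ∃ R : ℝ, ∀ z ∈ Ici 0 ×ℂ Ici 0, R ≤ ‖z‖ → ‖g z‖ * ‖z‖ ≤ ε) :
    Tendsto (fun R : ℝ ↦ (∫ x in (0 : ℝ)..R, g x) - I • ∫ t in (0 : ℝ)..R, g (t * I))
      atTop (𝓝 0) := by
  rw [NormedAddGroup.tendsto_nhds_zero]
  intro ε hε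
  obtain ⟨R₀, hR₀⟩ := hdecay (ε / 3) (by positivity)
  filter_upwards [eventually_ge_atTop R₀, eventually_gt_atTop 0] with R hR₀R hR
  have hbound : ∀ z ∈ Ici 0 ×ℂ Ici 0, R ≤ ‖z‖ → ‖g z‖ ≤ ε / 3 / R := fun z hz hRz ↦ by
    rw [le_div_iff₀ hR]
    calc ‖g z‖ * R ≤ ‖g z‖ * ‖z‖ := by gcongr
      _ ≤ ε / 3 := hR₀ z hz (hR₀R.trans hRz)
  have htop : ‖∫ x in (0 : ℝ)..R, g (x + R * I)‖ ≤ ε / 3 := by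
    refine norm_intervalIntegral_le_of_norm_le_div hR fun x hx ↦ hbound _ ?_ ?_
    · rw [uIoc_of_le hR.le] at hx
      simp [mem_reProdIm, hx.1.le, hR.le]
    · simpa [abs_of_pos hR] using abs_im_le_norm (x + R * I)
  have hright : ‖∫ t in (0 : ℝ)..R, g (R + t * I)‖ ≤ ε / 3 := by
    refine norm_intervalIntegral_le_of_norm_le_div hR fun t ht ↦ hbound _ ?_ ?_
    · rw [uIoc_of_le hR.le] at ht
      simp [mem_reProdIm, ht.1.le, hR.le]
    · simpa [abs_of_pos hR] using abs_re_le_norm (R + t * I)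
  rw [integral_sub_I_smul_integral_eq_of_differentiableOn hg hR.le]
  calc _ ≤ ‖∫ x in (0 : ℝ)..R, g (x + R * I)‖ + ‖I • ∫ t in (0 : ℝ)..R, g (R + t * I)‖ :=
        norm_sub_le _ _
    _ ≤ ε / 3 + ε / 3 := by rw [norm_smul, norm_I, one_mul]; exact add_le_add htop hright
    _ < ε := by linarith

theorem integral_Ioi_eq_I_smul_integral_Ioi_mul_I
    (hg : DifferentiableOn ℂ g (Ici 0 ×ℂ Ici 0))
    (hdecay : ∀ ε > (0 : ℝ), ∃ R : ℝ, ∀ z ∈ Ici 0 ×ℂ Ici 0, R ≤ ‖z‖ → ‖g z‖ * ‖z‖ ≤ ε)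
    (hreal : IntegrableOn (fun x : ℝ ↦ g x) (Ioi 0))
    (himag : IntegrableOn (fun t : ℝ ↦ g (t * I)) (Ioi 0)) :
    ∫ x in Ioi (0 : ℝ), g x = I • ∫ t in Ioi (0 : ℝ), g (t * I) := by
  have hlim := (intervalIntegral_tendsto_integral_Ioi 0 hreal tendsto_id).sub
    ((intervalIntegral_tendsto_integral_Ioi 0 himag tendsto_id).const_smul I)
  exact sub_eq_zero.mp <|
    tendsto_nhds_unique hlim (tendsto_integral_sub_I_smul_integral_zero hg hdecay)

end QuarterPlane

theorem integral_Ioi_mul_abs_eq_I_sq_mul {F : ℂ → ℂ}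
    (hF : DifferentiableOn ℂ F (Ici 0 ×ℂ Ici 0))
    (hdecay : ∀ ε > (0 : ℝ), ∃ R : ℝ, ∀ z ∈ Ici 0 ×ℂ Ici 0, R ≤ ‖z‖ → ‖F z‖ * ‖z‖ ^ 2 ≤ ε)
    (hreal : IntegrableOn (fun x : ℝ ↦ F x * |x|) (Ioi 0))
    (himag : IntegrableOn (fun t : ℝ ↦ F (I * t) * |t|) (Ioi 0)) :
    ∫ x in Ioi (0 : ℝ), F x * |x| = I ^ 2 * ∫ t in Ioi (0 : ℝ), F (I * t) * |t| := by
  have hreal_eq : EqOn (fun x : ℝ ↦ F x * |x|) (fun x : ℝ ↦ x * F x) (Ioi 0) := fun x hx ↦ by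
    simp [abs_of_pos (mem_Ioi.mp hx), mul_comm]
  have himag_eq : EqOn (fun t : ℝ ↦ I * (F (I * t) * |t|)) (fun t : ℝ ↦ t * I * F (t * I))
      (Ioi 0) := fun t ht ↦ by
    simp only [abs_of_pos (mem_Ioi.mp ht), mul_comm (t : ℂ) I]
    ring
  have hrot := integral_Ioi_eq_I_smul_integral_Ioi_mul_I (g := fun z ↦ z * F z)
    (differentiableOn_id.mul hF)
    (fun ε hε ↦ (hdecay ε hε).imp fun R hR z hz hRz ↦
      (by rw [norm_mul]; ring : _ = ‖F z‖ * ‖z‖ ^ 2).trans_le (hR z hz hRz))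
    (hreal.congr_fun hreal_eq measurableSet_Ioi)
    (IntegrableOn.congr_fun (himag.const_mul I) himag_eq measurableSet_Ioi)
  rw [setIntegral_congr_fun measurableSet_Ioi hreal_eq, hrot, smul_eq_mul,
    ← setIntegral_congr_fun measurableSet_Ioi himag_eq, integral_const_mul, ← mul_assoc, sq]

lemma integral_eq_integral_Ioi_add_integral_Ioi_comp_neg {E : Type*} [NormedAddCommGroup E]
    [NormedSpace ℝ E] {φ : ℝ → E} (hφ : Integrable φ) :
    ∫ x, φ x = (∫ x in Ioi (0 : ℝ), φ x) + ∫ x in Ioi (0 : ℝ), φ (-x) := by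
  rw [integral_comp_neg_Ioi, neg_zero, add_comm,
    intervalIntegral.integral_Iic_add_Ioi hφ.integrableOn hφ.integrableOn]

open Complex MeasureTheory Filter in
/-- Contour rotation: if `f` is analytic on (neighborhoods of) the closed first and
third quadrants, decays like `o(1/|z|²)` there, and both integrals converge
absolutely, then `∫_{-∞}^{∞} f(x)|x| dx = i² ∫_{-∞}^{∞} f(it)|t| dt`. -/
theorem contour_rotation_abs_weight (f : ℂ → ℂ)
    (hf1 : ∃ U : Set ℂ, IsOpen U ∧ {z : ℂ | 0 ≤ z.re ∧ 0 ≤ z.im} ⊆ U ∧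
      AnalyticOn ℂ f U)
    (hf3 : ∃ U : Set ℂ, IsOpen U ∧ {z : ℂ | z.re ≤ 0 ∧ z.im ≤ 0} ⊆ U ∧
      AnalyticOn ℂ f U)
    (hdecay : ∀ ε > (0:ℝ), ∃ R : ℝ, ∀ z : ℂ,
      (0 ≤ z.re ∧ 0 ≤ z.im) ∨ (z.re ≤ 0 ∧ z.im ≤ 0) → R ≤ ‖z‖ →
      ‖f z‖ * ‖z‖ ^ 2 ≤ ε)
    (hint_re : Integrable (fun x : ℝ => f x * |x|))
    (hint_im : Integrable (fun t : ℝ => f (Complex.I * t) * |t|)) :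
    ∫ x : ℝ, f x * |x| = Complex.I ^ 2 * ∫ t : ℝ, f (Complex.I * t) * |t| := by
  obtain ⟨U₁, -, hQ₁, hf₁⟩ := hf1
  obtain ⟨U₃, -, hQ₃, hf₃⟩ := hf3
  have hneg_mem : ∀ z ∈ Ici 0 ×ℂ Ici 0, -z ∈ {z : ℂ | z.re ≤ 0 ∧ z.im ≤ 0} :=
    fun z hz ↦ by simpa [mem_reProdIm] using hz
  have hpos := integral_Ioi_mul_abs_eq_I_sq_mul (hf₁.differentiableOn.mono hQ₁)
    (fun ε hε ↦ (hdecay ε hε).imp fun R hR z hz ↦ hR z (Or.inl hz))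
    hint_re.integrableOn hint_im.integrableOn
  have hneg := integral_Ioi_mul_abs_eq_I_sq_mul (F := fun z ↦ f (-z))
    ((hf₃.differentiableOn.mono hQ₃).comp (differentiableOn_neg _) hneg_mem)
    (fun ε hε ↦ (hdecay ε hε).imp fun R hR z hz hRz ↦ by
      simpa using hR (-z) (Or.inr (hneg_mem z hz)) (by rwa [norm_neg]))
    (by simpa using hint_re.comp_neg.integrableOn) (by simpa using hint_im.comp_neg.integrableOn)
  rw [integral_eq_integral_Ioi_add_integral_Ioi_comp_neg hint_re,
    integral_eq_integral_Ioi_add_integral_Ioi_comp_neg hint_im, mul_add, hpos]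
  simpa using hneg
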